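/- arXiv:1409.1436 — 5 statements merged into one kernel-verified Lean document; each statement's English description precedes it below -/
import Mathlib

section
/- Let G be a network with G(l,h) = 0 for distinct agents l, h, and let P_h be a perception with P_h(h,k) = G(h,k) for all k (h is correct about its own links). Let G' be G with the link {l,h} added. Define agent l's updated perception P'_l by P'_l(j,k) = P_h(j,k) for j,k ≠ l and P'_l(l,k) = G'(l,k) for all k, and let P'_h be P_h with h's own row corrected, i.e. P'_h(h,k) = G'(h,k) for all k and P'_h = P_h elsewhere. Then ρ(G',P'_l) ≥ ρ(G',P'_h), with equality if and only if P_h(l,k) = G(l,k) for every k ∉ {l,h} (h correctly perceived all of l's link states with third parties). -/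
open Finset

/-- Accuracy of perception `P` with respect to network `G` on `n` agents. -/
noncomputable def acc (n : ℕ) (G P : Fin n → Fin n → Bool) : ℝ :=
  (((Finset.univ : Finset (Fin n × Fin n)).filter fun pr =>
      pr.1 < pr.2 ∧ P pr.1 pr.2 = G pr.1 pr.2).card : ℝ) / ((n : ℝ) * ((n : ℝ) - 1) / 2)

theorem stmt3 (n : ℕ) (hn : 3 ≤ n) (l h : Fin n) (hlh : l ≠ h)
    (G G' Ph P'l P'h : Fin n → Fin n → Bool)
    (hGsym : ∀ j k, G j k = G k j) (hGirr : ∀ i, G i i = false)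
    (hG'sym : ∀ j k, G' j k = G' k j) (hG'irr : ∀ i, G' i i = false)
    (hPhsym : ∀ j k, Ph j k = Ph k j) (hPhirr : ∀ i, Ph i i = false)
    (hP'lsym : ∀ j k, P'l j k = P'l k j) (hP'lirr : ∀ i, P'l i i = false)
    (hP'hsym : ∀ j k, P'h j k = P'h k j) (hP'hirr : ∀ i, P'h i i = false)
    (hGlh : G l h = false)
    (hPhown : ∀ k, Ph h k = G h k)
    (hG' : ∀ j k, G' j k = true ↔
      (G j k = true ∨ (j = l ∧ k = h) ∨ (j = h ∧ k = l)))
    (hP'loff : ∀ j k, j ≠ l → k ≠ l → P'l j k = Ph j k)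
    (hP'lown : ∀ k, P'l l k = G' l k)
    (hP'hown : ∀ k, P'h h k = G' h k)
    (hP'hoff : ∀ j k, j ≠ h → k ≠ h → P'h j k = Ph j k) :
    acc n G' P'h ≤ acc n G' P'l ∧
    (acc n G' P'l = acc n G' P'h ↔
      ∀ k, k ≠ l → k ≠ h → Ph l k = G l k) := by
  -- G' agrees with G off the pair {l,h}
  have hG'eq : ∀ j k : Fin n, ¬(j = l ∧ k = h) → ¬(j = h ∧ k = l) → G' j k = G j k := by
    intro j k h1 h2
    have hiff := hG' j k
    have : (G' j k = true ↔ G j k = true) := by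
      constructor
      · intro ht
        rcases hiff.mp ht with hx | hx | hx
        · exact hx
        · exact absurd hx h1
        · exact absurd hx h2
      · intro ht; exact hiff.mpr (Or.inl ht)
    cases hb : G' j k <;> cases hb' : G j k <;> simp_all
  -- key: wherever P'h is correct, so is P'l
  have keyA : ∀ j k : Fin n, P'h j k = G' j k → P'l j k = G' j k := by
    intro j k hjk
    by_cases hjl : j = l
    · rw [hjl]; exact hP'lown k
    · by_cases hkl : k = l
      · rw [hkl, hP'lsym, hP'lown j, hG'sym]
      · rw [hP'loff j k hjl hkl]
        by_cases hjh : j = h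
        · rw [hjh, hPhown k, hG'eq h k (fun hx => hlh hx.1.symm) (fun hx => hkl hx.2)]
        · by_cases hkh : k = h
          · rw [hkh, hPhsym, hPhown j, hG'sym,
              hG'eq h j (fun hx => hlh hx.1.symm) (fun hx => hjl hx.2)]
          · rw [← hP'hoff j k hjh hkh]; exact hjk
  set S := (Finset.univ : Finset (Fin n × Fin n)).filter fun pr =>
      pr.1 < pr.2 ∧ P'h pr.1 pr.2 = G' pr.1 pr.2 with hS
  set T := (Finset.univ : Finset (Fin n × Fin n)).filter fun pr =>
      pr.1 < pr.2 ∧ P'l pr.1 pr.2 = G' pr.1 pr.2 with hT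
  have hsub : S ⊆ T := by
    intro pr hpr
    simp only [hS, hT, Finset.mem_filter, Finset.mem_univ, true_and] at *
    exact ⟨hpr.1, keyA _ _ hpr.2⟩
  have hDpos : (0 : ℝ) < (n : ℝ) * ((n : ℝ) - 1) / 2 := by
    have h3 : (3 : ℝ) ≤ (n : ℝ) := by exact_mod_cast hn
    nlinarith
  have hcard : S.card ≤ T.card := Finset.card_le_card hsub
  constructor
  · unfold acc
    gcongr
  · constructor
    · -- equality of accuracies implies S = T implies condition
      intro heq
      have hcards : (T.card : ℝ) = (S.card : ℝ) := by
        have := heq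
        unfold acc at this
        rw [div_eq_div_iff hDpos.ne' hDpos.ne'] at this
        exact mul_right_cancel₀ hDpos.ne' this
      have hcardeq : T.card ≤ S.card := by exact_mod_cast le_of_eq hcards
      have hST : S = T := Finset.eq_of_subset_of_card_le hsub hcardeq
      intro k hkl hkh
      have hlk : l ≠ k := fun hx => hkl hx.symm
      have hG'lk : G' l k = G l k :=
        hG'eq l k (fun hx => hkh hx.2) (fun hx => hlh hx.1)
      -- the ordered pair corresponding to {l,k} lies in T, hence in S
      have hmem : ∀ a b : Fin n, a < b → P'l a b = G' a b → P'h a b = G' a b := by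
        intro a b hab hcor
        have : (a, b) ∈ T := by
          simp only [hT, Finset.mem_filter, Finset.mem_univ, true_and]
          exact ⟨hab, hcor⟩
        rw [← hST] at this
        simp only [hS, Finset.mem_filter, Finset.mem_univ, true_and] at this
        exact this.2
      have hPh' : P'h l k = G' l k := by
        rcases lt_trichotomy l k with hlt | heq' | hgt
        · exact hmem l k hlt (hP'lown k)
        · exact absurd heq' hlk
        · have := hmem k l hgt (by rw [hP'lsym k l, hP'lown k, hG'sym])
          rw [hP'hsym, this, hG'sym]
      rw [hP'hoff l k hlh hkh] at hPh'
      rw [hPh', hG'lk]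
    · -- condition implies S = T implies equal accuracies
      intro hcond
      have keyB : ∀ j k : Fin n, P'l j k = G' j k → P'h j k = G' j k := by
        intro j k hjk
        by_cases hjh : j = h
        · rw [hjh]; exact hP'hown k
        · by_cases hkh : k = h
          · rw [hkh, hP'hsym, hP'hown j, hG'sym]
          · rw [hP'hoff j k hjh hkh]
            by_cases hjl : j = l
            · by_cases hkl : k = l
              · rw [hjl, hkl, hPhirr, hG'irr]
              · rw [hjl, hcond k hkl hkh,
                  hG'eq l k (fun hx => hkh hx.2) (fun hx => hlh hx.1)]
            · by_cases hkl : k = l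
              · rw [hkl, hPhsym, hcond j hjl hjh, hGsym,
                  hG'eq j l (fun hx => hjl hx.1) (fun hx => hjh hx.1)]
              · rw [← hP'loff j k hjl hkl]; exact hjk
      have hsub2 : T ⊆ S := by
        intro pr hpr
        simp only [hS, hT, Finset.mem_filter, Finset.mem_univ, true_and] at *
        exact ⟨hpr.1, keyB _ _ hpr.2⟩
      have hST : S = T := Finset.Subset.antisymm hsub hsub2
      unfold acc
      rw [← hS, ← hT, hST]
end

section
/- Let G be a network with G(l,h) = 0 for distinct agents l, h, let P_h be a perception with P_h(h,k) = G(h,k) for all k, and suppose P_h(l,k) ≠ G(l,k) for at least one k ∉ {l,h} (h misperceives at least one of l's link states with a third party). Let G' be G with the link {l,h} added, let P'_l be agent l's update of P_h (P'_l(j,k) = P_h(j,k) for j,k ≠ l, P'_l(l,k) = G'(l,k)), and let P'_h be P_h with h's own row corrected to G'. Then for every agent i ∉ {l,h} and every perception P_i with P_i(i,k) = G(i,k) for all k and ρ(G,P_i) ≤ ρ(G,P_h), it holds that ρ(G',P'_l) ≥ ρ(G',P_i) and ρ(G',P'_l) ≥ ρ(G',P'_h): after the link and the update, the updating agent attains the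 maximal accuracy. -/
/-!
Count correctly perceived pairs instead of accuracies; the normalisation is the same for all of
them. Adding the link `{l, h}` changes the truth value of a single pair, so any perception gains
at most one correct pair. Agent `l`, after updating, perceives every pair containing `l`
correctly, and off `l` it perceives exactly what `h` did: so it gains one correct pair for each
pair containing `l` that `h` misperceived (at least one by assumption), which beats every
bystander `i` no worse than `h`. Finally, `P'_h` agrees with `P'_l` on the pairs avoiding `l`
(`h`'s own row was already correct), and on the pairs containing `l` nothing beats `P'_l`.
-/

open Finset

variable {n : ℕ}

def correctPairs (n : ℕ) (G P : Fin n → Fin n → Bool) : Finset (Fin n × Fin n) :=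
  univ.filter fun p => p.1 < p.2 ∧ P p.1 p.2 = G p.1 p.2

def wrongPairsAt (n : ℕ) (l : Fin n) (G P : Fin n → Fin n → Bool) : Finset (Fin n × Fin n) :=
  univ.filter fun p => p.1 < p.2 ∧ (p.1 = l ∨ p.2 = l) ∧ P p.1 p.2 ≠ G p.1 p.2

lemma acc_le_acc_iff (hn : 2 ≤ n) (G G' P P' : Fin n → Fin n → Bool) :
    acc n G P ≤ acc n G' P' ↔ #(correctPairs n G P) ≤ #(correctPairs n G' P') := by
  have hn' : (2 : ℝ) ≤ n := by exact_mod_cast hn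
  have hM : (0 : ℝ) < (n : ℝ) * ((n : ℝ) - 1) / 2 := by nlinarith
  rw [acc, acc, div_le_div_iff_of_pos_right hM, Nat.cast_le]
  rfl

lemma card_correctPairs_le_add_one {G G' : Fin n → Fin n → Bool} {a b : Fin n}
    (hGG' : ∀ j k, ¬(j = a ∧ k = b) → ¬(j = b ∧ k = a) → G' j k = G j k)
    (P : Fin n → Fin n → Bool) :
    #(correctPairs n G' P) ≤ #(correctPairs n G P) + 1 := by
  refine (card_le_card ?_).trans (card_insert_le (min a b, max a b) _)
  rintro ⟨j, k⟩ hjk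
  simp only [correctPairs, mem_filter, mem_univ, true_and, mem_insert, Prod.mk.injEq] at hjk ⊢
  obtain ⟨hlt, hP⟩ := hjk
  by_cases hab : (j = a ∧ k = b) ∨ (j = b ∧ k = a)
  · left
    rcases hab with ⟨rfl, rfl⟩ | ⟨rfl, rfl⟩
    · exact ⟨(min_eq_left hlt.le).symm, (max_eq_right hlt.le).symm⟩
    · exact ⟨(min_eq_right hlt.le).symm, (max_eq_left hlt.le).symm⟩
  · right
    exact ⟨hlt, hP.trans (hGG' j k (fun h => hab (.inl h)) (fun h => hab (.inr h)))⟩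

lemma card_correctPairs_add_card_wrongPairsAt_le {H G' P Q : Fin n → Fin n → Bool} {l : Fin n}
    (hG'sym : ∀ j k, G' j k = G' k j) (hQsym : ∀ j k, Q j k = Q k j)
    (hQl : ∀ k, Q l k = G' l k)
    (hoff : ∀ j k, j ≠ l → k ≠ l → P j k = H j k → Q j k = G' j k) :
    #(correctPairs n H P) + #(wrongPairsAt n l H P) ≤ #(correctPairs n G' Q) := by
  have hdisj : Disjoint (correctPairs n H P) (wrongPairsAt n l H P) :=
    disjoint_filter.2 fun _ _ hc hw => hw.2.2 hc.2
  rw [← card_union_of_disjoint hdisj]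
  refine card_le_card fun ⟨j, k⟩ hjk => ?_
  have hQ : j = l ∨ k = l → Q j k = G' j k := by
    rintro (rfl | rfl)
    · exact hQl k
    · rw [hQsym, hQl, hG'sym]
  simp only [correctPairs, wrongPairsAt, mem_union, mem_filter, mem_univ, true_and] at hjk ⊢
  by_cases hl : j = l ∨ k = l
  · exact ⟨by tauto, hQ hl⟩
  · rw [not_or] at hl
    rcases hjk with ⟨hlt, hP⟩ | ⟨_, hl', _⟩
    · exact ⟨hlt, hoff j k hl.1 hl.2 hP⟩
    · tauto

lemma wrongPairsAt_nonempty {G P : Fin n → Fin n → Bool} (hGsym : ∀ j k, G j k = G k j)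
    (hPsym : ∀ j k, P j k = P k j) {l k : Fin n} (hkl : k ≠ l) (hk : P l k ≠ G l k) :
    (wrongPairsAt n l G P).Nonempty := by
  rcases lt_or_gt_of_ne hkl with hlt | hgt
  · exact ⟨(k, l), by simp [wrongPairsAt, hlt, hPsym k l, hGsym k l, hk]⟩
  · exact ⟨(l, k), by simp [wrongPairsAt, hgt, hk]⟩

theorem stmt4_general (n : ℕ) (hn : 3 ≤ n) (l h : Fin n)
    (G G' Ph P'l P'h : Fin n → Fin n → Bool)
    (hGsym : ∀ j k, G j k = G k j)
    (hG'sym : ∀ j k, G' j k = G' k j)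
    (hPhsym : ∀ j k, Ph j k = Ph k j)
    (hP'lsym : ∀ j k, P'l j k = P'l k j)
    (hP'hsym : ∀ j k, P'h j k = P'h k j)
    (hPhown : ∀ k, Ph h k = G h k)
    (hmis : ∃ k, k ≠ l ∧ k ≠ h ∧ Ph l k ≠ G l k)
    (hG' : ∀ j k, G' j k = true ↔
      (G j k = true ∨ (j = l ∧ k = h) ∨ (j = h ∧ k = l)))
    (hP'loff : ∀ j k, j ≠ l → k ≠ l → P'l j k = Ph j k)
    (hP'lown : ∀ k, P'l l k = G' l k)
    (hP'hown : ∀ k, P'h h k = G' h k)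
    (hP'hoff : ∀ j k, j ≠ h → k ≠ h → P'h j k = Ph j k) :
    (∀ (i : Fin n) (Pi : Fin n → Fin n → Bool), i ≠ l → i ≠ h →
      (∀ j k, Pi j k = Pi k j) → (∀ j, Pi j j = false) →
      (∀ k, Pi i k = G i k) →
      acc n G Pi ≤ acc n G Ph →
      acc n G' Pi ≤ acc n G' P'l) ∧
    acc n G' P'h ≤ acc n G' P'l := by
  have hG'G : ∀ j k, ¬(j = l ∧ k = h) → ¬(j = h ∧ k = l) → G' j k = G j k := by
    intro j k _ _
    rw [Bool.eq_iff_iff, hG']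
    tauto
  have hP'h_row : ∀ k, k ≠ l → P'h h k = Ph h k := fun k hk => by
    rw [hP'hown, hPhown, hG'G h k (by rintro ⟨rfl, rfl⟩; exact hk rfl) (by tauto)]
  have hP'h_off : ∀ j k, j ≠ l → k ≠ l → P'h j k = Ph j k := by
    intro j k hj hk
    by_cases hjh : j = h
    · exact hjh ▸ hP'h_row k hk
    by_cases hkh : k = h
    · rw [hkh, hP'hsym, hP'h_row j hj, hPhsym]
    exact hP'hoff j k hjh hkh
  refine ⟨fun i Pi _ _ _ _ _ hacc => ?_, ?_⟩
  · rw [acc_le_acc_iff (by omega)] at hacc ⊢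
    obtain ⟨k, hkl, -, hk⟩ := hmis
    have hwrong := card_pos.2 (wrongPairsAt_nonempty hGsym hPhsym hkl hk)
    have hgain := card_correctPairs_add_card_wrongPairsAt_le hG'sym hP'lsym hP'lown
      fun j k hj hk (hPh : Ph j k = G j k) => by rw [hP'loff j k hj hk, hPh, hG'G j k (by tauto) (by tauto)]
    have := card_correctPairs_le_add_one hG'G Pi
    omega
  · rw [acc_le_acc_iff (by omega)]
    exact le_of_add_le_left (card_correctPairs_add_card_wrongPairsAt_le hG'sym hP'lsym hP'lown
      fun j k hj hk (hP'h : P'h j k = G' j k) => by rw [hP'loff j k hj hk, ← hP'h_off j k hj hk, hP'h])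

theorem stmt4 (n : ℕ) (hn : 3 ≤ n) (l h : Fin n) (hlh : l ≠ h)
    (G G' Ph P'l P'h : Fin n → Fin n → Bool)
    (hGsym : ∀ j k, G j k = G k j) (hGirr : ∀ i, G i i = false)
    (hG'sym : ∀ j k, G' j k = G' k j) (hG'irr : ∀ i, G' i i = false)
    (hPhsym : ∀ j k, Ph j k = Ph k j) (hPhirr : ∀ i, Ph i i = false)
    (hP'lsym : ∀ j k, P'l j k = P'l k j) (hP'lirr : ∀ i, P'l i i = false)
    (hP'hsym : ∀ j k, P'h j k = P'h k j) (hP'hirr : ∀ i, P'h i i = false)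
    (hGlh : G l h = false)
    (hPhown : ∀ k, Ph h k = G h k)
    (hmis : ∃ k, k ≠ l ∧ k ≠ h ∧ Ph l k ≠ G l k)
    (hG' : ∀ j k, G' j k = true ↔
      (G j k = true ∨ (j = l ∧ k = h) ∨ (j = h ∧ k = l)))
    (hP'loff : ∀ j k, j ≠ l → k ≠ l → P'l j k = Ph j k)
    (hP'lown : ∀ k, P'l l k = G' l k)
    (hP'hown : ∀ k, P'h h k = G' h k)
    (hP'hoff : ∀ j k, j ≠ h → k ≠ h → P'h j k = Ph j k) :
    (∀ (i : Fin n) (Pi : Fin n → Fin n → Bool), i ≠ l → i ≠ h →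
      (∀ j k, Pi j k = Pi k j) → (∀ j, Pi j j = false) →
      (∀ k, Pi i k = G i k) →
      acc n G Pi ≤ acc n G Ph →
      acc n G' Pi ≤ acc n G' P'l) ∧
    acc n G' P'h ≤ acc n G' P'l :=
  stmt4_general n hn l h G G' Ph P'l P'h hGsym hG'sym hPhsym hP'lsym hP'hsym hPhown hmis hG' hP'loff
    hP'lown hP'hown hP'hoff
end

section
/- (Proposition 1, deterministic form.) Consider the dynamics with cost c = 0. Assume: (i) for every period t ≤ n−1 the least accurate agent l_t and the most accurate agent h_t are unique (no ties at the minimum or the maximum of accuracy); (ii) for every t ≤ n−2, l_t ≠ h_0; and (iii) for every t ≤ n−2, P^{h_t}_t(l_t,k) ≠ G_t(l_t,k) for some k ∉ {l_t,h_t} (the chosen most accurate agent misperceives at least one of the updater's link states with a third party). Then the agents h_0, l_0, l_1, …, l_{n−2} are n pairwise distinct agents; h_{t+1} = l_t for every 0 ≤ t ≤ n−2; for every 1 ≤ t ≤ n−1 the network G_t is exactly the path h_0 — l_0 — l_1 — ⋯ — l_{t−1} (all other agents isolated); at period n−1 the unique least accurate agent is h_0 and the link {h_0, l_{n−2}} is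 added, so that G_n is exactly the n-cycle h_0 — l_0 — ⋯ — l_{n−2} — h_0. -/
open Finset

/-- The coevolution dynamics of a network and perceptions, with linking cost `c`.
`G t` is the network at period `t`, `P t i` is agent `i`'s perception at period `t`,
`l t` is the chosen least accurate agent and `h t` the chosen most accurate agent. -/
structure Dyn (n : ℕ) (c : ℝ) where
  G : ℕ → Fin n → Fin n → Bool
  P : ℕ → Fin n → Fin n → Fin n → Bool
  l : ℕ → Fin n
  h : ℕ → Fin n
  G_symm : ∀ t j k, G t j k = G t k j
  G_irrefl : ∀ t i, G t i i = false
  P_symm : ∀ t i j k, P t i j k = P t i k j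
  P_irrefl : ∀ t i j, P t i j j = false
  G_init : ∀ j k, G 0 j k = false
  own_correct : ∀ t i k, P t i i k = G t i k
  l_min : ∀ t i, acc n (G t) (P t (l t)) ≤ acc n (G t) (P t i)
  h_max : ∀ t i, acc n (G t) (P t i) ≤ acc n (G t) (P t (h t))
  h_pref : ∀ t, (∃ i, G t (l t) i = true ∧
      ∀ j, acc n (G t) (P t j) ≤ acc n (G t) (P t i)) → G t (l t) (h t) = true
  step_old : ∀ t, G t (l t) (h t) = true →
      (G (t + 1) = G t ∧
        ∀ j k, j ≠ l t → k ≠ l t → P (t + 1) (l t) j k = P t (h t) j k)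
  step_add : ∀ t, G t (l t) (h t) = false →
      c < 2 / (n : ℝ) + (1 - 2 / (n : ℝ)) * acc n (G t) (P t (h t))
          - acc n (G t) (P t (l t)) →
      ((∀ j k, G (t + 1) j k = true ↔
          (G t j k = true ∨ (j = l t ∧ k = h t) ∨ (j = h t ∧ k = l t))) ∧
        ∀ j k, j ≠ l t → k ≠ l t → P (t + 1) (l t) j k = P t (h t) j k)
  step_none : ∀ t, G t (l t) (h t) = false →
      ¬ (c < 2 / (n : ℝ) + (1 - 2 / (n : ℝ)) * acc n (G t) (P t (h t))
          - acc n (G t) (P t (l t))) →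
      (G (t + 1) = G t ∧ ∀ i, P (t + 1) i = P t i)
  keep : ∀ t i, i ≠ l t → ∀ j k, j ≠ i → k ≠ i → P (t + 1) i j k = P t i j k

namespace Dyn

variable {n : ℕ} {c : ℝ}

/-- Accuracy of agent `i` at period `t`. -/
noncomputable def rho (D : Dyn n c) (t : ℕ) (i : Fin n) : ℝ :=
  acc n (D.G t) (D.P t i)

/-- The threshold cost `c_t = 2/n + (1 − 2/n)·ρ^{h_t}_t − ρ^{l_t}_t`. -/
noncomputable def thr (D : Dyn n c) (t : ℕ) : ℝ :=
  2 / (n : ℝ) + (1 - 2 / (n : ℝ)) * D.rho t (D.h t) - D.rho t (D.l t)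

/-- Number of links in a network. -/
def numLinks (G : Fin n → Fin n → Bool) : ℕ :=
  ((Finset.univ : Finset (Fin n × Fin n)).filter fun pr =>
    pr.1 < pr.2 ∧ G pr.1 pr.2 = true).card

end Dyn

/-!
Label the agents in the order in which they update: `v 0 = h₀` and `v (s + 1) = l_s`. By
induction on `t ≤ n - 1`: `G_t` is the path `v 0 — ⋯ — v t`, `h_t = v t`, and each `v r` with
`r ≤ t` perceives correctly every pair meeting `{v 0, …, v r}` and agrees with the initial
perception of `h₀` on all other pairs. Since `h_t` misperceives a link of `l_t`, the agent `l_t`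
lies off the path. The threshold is positive because `l_t` is not perfectly accurate, so `l_t`
links to `h_t` and copies it; it is then correct on every pair meeting the longer path. This
beats `h_t`, which still misperceives that link of `l_t`, and every other agent, which was
strictly below `h_t` and gains at most the one new link; hence `h_{t+1} = l_t`. At `t = n - 1`
the path covers every agent and the correctly perceived pairs of `v 0, v 1, …, v (n - 1)` are
nested, so `h₀` is the least accurate agent, and its link to `v (n - 1)` closes the cycle.
-/

section Agreement

variable {α : Type*} [LinearOrder α] [Fintype α]

def agreeSet (G P : α → α → Bool) : Finset (α × α) :=
  {p | p.1 < p.2 ∧ P p.1 p.2 = G p.1 p.2}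

theorem card_agreeSet_le (G P : α → α → Bool) :
    #(agreeSet G P) ≤ (Fintype.card α).choose 2 := by
  rw [← Fintype.card_product_filter_lt]
  refine card_le_card fun p hp => ?_
  simp only [agreeSet, mem_filter] at hp ⊢
  exact ⟨hp.1, hp.2.1⟩

theorem mem_agreeSet_of_ne {G P : α → α → Bool} (hG : ∀ j k, G j k = G k j)
    (hP : ∀ j k, P j k = P k j) {j k : α} (hjk : j ≠ k) (h : P j k = G j k) :
    (min j k, max j k) ∈ agreeSet G P := by
  rcases hjk.lt_or_gt with hlt | hlt
  · simpa [agreeSet, hlt, hlt.le] using h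
  · simpa [agreeSet, hlt, hlt.le, hG k j, hP k j] using h

def IsPatch (V : Set α) (G Q P : α → α → Bool) : Prop :=
  (∀ j k, j ∈ V ∨ k ∈ V → P j k = G j k) ∧
    (∀ j k, j ∉ V → k ∉ V → P j k = Q j k)

theorem IsPatch.agreeSet_subset {V W : Set α} {G G' Q P P' : α → α → Bool}
    (hP : IsPatch V G Q P) (hP' : IsPatch W G' Q P') (hVW : V ⊆ W)
    (hG : ∀ j k, j ∉ W → k ∉ W → G' j k = G j k) :
    agreeSet G P ⊆ agreeSet G' P' := by
  intro p hp
  simp only [agreeSet, mem_filter, mem_univ, true_and] at hp ⊢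
  refine ⟨hp.1, ?_⟩
  by_cases hW : p.1 ∈ W ∨ p.2 ∈ W
  · exact hP'.1 _ _ hW
  · push Not at hW
    rw [hP'.2 _ _ hW.1 hW.2, hG _ _ hW.1 hW.2, ← hp.2,
      hP.2 _ _ (fun h => hW.1 (hVW h)) (fun h => hW.2 (hVW h))]

theorem IsPatch.card_agreeSet_lt {V W : Set α} {G G' Q P P' : α → α → Bool}
    (hP : IsPatch V G Q P) (hP' : IsPatch W G' Q P') (hVW : V ⊆ W)
    (hG : ∀ j k, j ∉ W → k ∉ W → G' j k = G j k)
    (hGs : ∀ j k, G j k = G k j) (hPs : ∀ j k, P j k = P k j)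
    (hG's : ∀ j k, G' j k = G' k j) (hP's : ∀ j k, P' j k = P' k j)
    {j k : α} (hjk : j ≠ k) (hj : j ∈ W) (hwrong : P j k ≠ G j k) :
    #(agreeSet G P) < #(agreeSet G' P') := by
  refine card_lt_card ⟨hP.agreeSet_subset hP' hVW hG, fun hsub => ?_⟩
  have hin := hsub (mem_agreeSet_of_ne hG's hP's hjk (hP'.1 j k (.inl hj)))
  rcases hjk.lt_or_gt with hlt | hlt
  · simp [agreeSet, hlt, hlt.le, hwrong] at hin
  · simp only [agreeSet, mem_filter, mem_univ, true_and, hlt, min_eq_right, max_eq_left,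
      hlt.le] at hin
    exact hwrong (by rw [hPs, hGs]; exact hin)

theorem card_agreeSet_le_succ {G G' P P' : α → α → Bool} {i a b : α}
    (hG : ∀ j k, ¬(j = a ∧ k = b) → ¬(j = b ∧ k = a) → G' j k = G j k)
    (hP : ∀ j k, j ≠ i → k ≠ i → P' j k = P j k)
    (hown : ∀ j k, j = i ∨ k = i → P' j k = G' j k ∧ P j k = G j k) :
    #(agreeSet G' P') ≤ #(agreeSet G P) + 1 := by
  refine (card_le_card (s := agreeSet G' P') (t := insert (min a b, max a b) (agreeSet G P))
    fun p hp => ?_).trans (card_insert_le _ _)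
  simp only [agreeSet, mem_insert, mem_filter, mem_univ, true_and] at hp ⊢
  by_cases he : p = (min a b, max a b)
  · exact .inl he
  refine .inr ⟨hp.1, ?_⟩
  by_cases hi : p.1 = i ∨ p.2 = i
  · exact (hown _ _ hi).2
  push Not at hi
  rw [← hP _ _ hi.1 hi.2, hp.2]
  refine hG _ _ (fun ⟨h1, h2⟩ => he ?_) (fun ⟨h1, h2⟩ => he ?_)
  · have hab : a ≤ b := h1 ▸ h2 ▸ hp.1.le
    exact Prod.ext (h1.trans (min_eq_left hab).symm) (h2.trans (max_eq_right hab).symm)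
  · have hba : b ≤ a := h1 ▸ h2 ▸ hp.1.le
    exact Prod.ext (h1.trans (min_eq_right hba).symm) (h2.trans (max_eq_left hba).symm)

end Agreement

section Accuracy

variable {n : ℕ}

theorem acc_eq_card_agreeSet (G P : Fin n → Fin n → Bool) :
    acc n G P = #(agreeSet G P) / (n.choose 2 : ℝ) := by
  rw [Nat.cast_choose_two]
  rfl

theorem acc_le_one (G P : Fin n → Fin n → Bool) : acc n G P ≤ 1 := by
  rw [acc_eq_card_agreeSet]
  refine div_le_one_of_le₀ ?_ (Nat.cast_nonneg _)
  have h := card_agreeSet_le G P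
  rw [Fintype.card_fin] at h
  exact_mod_cast h

theorem acc_lt_acc_iff (hn : 2 ≤ n) {G G' P P' : Fin n → Fin n → Bool} :
    acc n G P < acc n G' P' ↔ #(agreeSet G P) < #(agreeSet G' P') := by
  have hM : (0 : ℝ) < n.choose 2 := by exact_mod_cast Nat.choose_pos hn
  rw [acc_eq_card_agreeSet, acc_eq_card_agreeSet, div_lt_div_iff_of_pos_right hM, Nat.cast_lt]

theorem acc_le_acc_of_subset {G G' P P' : Fin n → Fin n → Bool}
    (h : agreeSet G P ⊆ agreeSet G' P') : acc n G P ≤ acc n G' P' := by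
  rw [acc_eq_card_agreeSet, acc_eq_card_agreeSet]
  gcongr

end Accuracy

section Paths

variable {α : Type*} (v : ℕ → α)

def pathLinks (t : ℕ) (j k : α) : Prop :=
  ∃ s, s < t ∧ ((j = v s ∧ k = v (s + 1)) ∨ (j = v (s + 1) ∧ k = v s))

variable {v}

theorem not_pathLinks_zero (j k : α) : ¬ pathLinks v 0 j k := by
  simp [pathLinks]

theorem pathLinks_succ {t : ℕ} {j k : α} :
    pathLinks v (t + 1) j k ↔
      pathLinks v t j k ∨ (j = v t ∧ k = v (t + 1)) ∨ (j = v (t + 1) ∧ k = v t) := by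
  simp only [pathLinks, Nat.lt_succ_iff_lt_or_eq, or_and_right, exists_or, exists_eq_left]

theorem pathLinks.mem_image {t : ℕ} {j k : α} (h : pathLinks v t j k) :
    j ∈ v '' Set.Iic t ∧ k ∈ v '' Set.Iic t := by
  obtain ⟨s, hs, ⟨rfl, rfl⟩ | ⟨rfl, rfl⟩⟩ := h
  · exact ⟨⟨s, by simp; omega, rfl⟩, ⟨s + 1, by simp; omega, rfl⟩⟩
  · exact ⟨⟨s + 1, by simp; omega, rfl⟩, ⟨s, by simp; omega, rfl⟩⟩

theorem not_pathLinks_endpoints {t : ℕ} (hv : Set.InjOn v (Set.Iic t)) (ht : 2 ≤ t) :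
    ¬ pathLinks v t (v 0) (v t) := by
  rintro ⟨s, hs, ⟨h0, ht'⟩ | ⟨h0, -⟩⟩
  · have := hv (Set.mem_Iic.2 (Nat.zero_le t)) (Set.mem_Iic.2 hs.le) h0
    have := hv Set.self_mem_Iic (Set.mem_Iic.2 hs) ht'
    omega
  · exact Nat.succ_ne_zero s (hv (Set.mem_Iic.2 hs) (Set.mem_Iic.2 (Nat.zero_le t)) h0.symm)

theorem exists_cycle_iff {n : ℕ} (hn : 0 < n) {j k : α} :
    (∃ s, s < n ∧ ((j = v s ∧ k = v ((s + 1) % n)) ∨ (j = v ((s + 1) % n) ∧ k = v s))) ↔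
      pathLinks v (n - 1) j k ∨ (j = v 0 ∧ k = v (n - 1)) ∨ (j = v (n - 1) ∧ k = v 0) := by
  obtain ⟨m, rfl⟩ : ∃ m, n = m + 1 := ⟨n - 1, by omega⟩
  simp only [Nat.lt_succ_iff_lt_or_eq, or_and_right, exists_or, exists_eq_left, Nat.mod_self,
    Nat.add_sub_cancel]
  refine or_congr (exists_congr fun s => and_congr_right fun hs => ?_) or_comm
  rw [Nat.mod_eq_of_lt (by omega)]

theorem mem_image_Iic_succ {t : ℕ} {x : α} :
    x ∈ v '' Set.Iic (t + 1) ↔ x = v (t + 1) ∨ x ∈ v '' Set.Iic t := by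
  simp only [Set.mem_image, Set.mem_Iic, Nat.le_succ_iff, or_and_right, exists_or,
    exists_eq_left, eq_comm (a := x)]
  exact or_comm

theorem Set.InjOn.image_Iic_eq_univ [Fintype α] {m : ℕ} (hv : Set.InjOn v (Set.Iic m))
    (hm : Fintype.card α = m + 1) : v '' Set.Iic m = Set.univ := by
  refine Set.eq_of_subset_of_ncard_le (Set.subset_univ _) ?_
  rw [hv.ncard_image, Set.ncard_univ, Nat.card_eq_fintype_card, hm,
    ← Finset.coe_Iic, Set.ncard_coe_finset, Nat.card_Iic]

end Paths

section AddLink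

variable {α : Type*}

def AddsLink (G G' : α → α → Bool) (a b : α) : Prop :=
  ∀ j k, G' j k = true ↔ G j k = true ∨ (j = a ∧ k = b) ∨ (j = b ∧ k = a)

theorem AddsLink.apply_eq {G G' : α → α → Bool} {a b j k : α} (hG : AddsLink G G' a b)
    (hab : ¬(j = a ∧ k = b)) (hba : ¬(j = b ∧ k = a)) : G' j k = G j k := by
  rw [Bool.eq_iff_iff, hG]
  tauto

end AddLink

namespace Dyn

variable {n : ℕ} {c : ℝ} (D : Dyn n c) (v : ℕ → Fin n)

theorem P_eq_G_of_mem {t : ℕ} {i j k : Fin n} (h : j = i ∨ k = i) :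
    D.P t i j k = D.G t j k := by
  rcases h with rfl | rfl
  · exact D.own_correct t j k
  · rw [D.P_symm, D.own_correct, D.G_symm]

theorem thr_pos (hn : 2 ≤ n) {t : ℕ} (hl : D.rho t (D.l t) < 1) : 0 < D.thr t := by
  have hlh : D.rho t (D.l t) ≤ D.rho t (D.h t) := D.l_min t (D.h t)
  have hn' : (2 : ℝ) ≤ n := by exact_mod_cast hn
  have h2n : 0 < 2 / (n : ℝ) := by positivity
  have h2n' : 2 / (n : ℝ) ≤ 1 := (div_le_one (by linarith)).2 hn'
  unfold thr
  nlinarith [mul_le_mul_of_nonneg_left hlh (sub_nonneg.2 h2n'), mul_pos h2n (sub_pos.2 hl)]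

structure PathInv (t : ℕ) : Prop where
  injOn : Set.InjOn v (Set.Iic t)
  h_eq : D.h t = v t
  G_iff : ∀ j k, D.G t j k = true ↔ pathLinks v t j k
  isPatch : ∀ r ≤ t, IsPatch (v '' Set.Iic r) (D.G t) (D.P 0 (v 0)) (D.P t (v r))

variable {D v}

theorem pathInv_zero (hv0 : v 0 = D.h 0) : D.PathInv v 0 where
  injOn := by simp [Set.InjOn]
  h_eq := hv0.symm
  G_iff j k := by simp [D.G_init, not_pathLinks_zero]
  isPatch r hr := by
    obtain rfl : r = 0 := Nat.le_zero.1 hr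
    refine ⟨fun j k hjk => D.P_eq_G_of_mem ?_, fun _ _ _ _ => rfl⟩
    simpa [eq_comm] using hjk

namespace PathInv

variable {t : ℕ}

theorem l_not_mem (I : D.PathInv v t) {k : Fin n}
    (hwrong : D.P t (D.h t) (D.l t) k ≠ D.G t (D.l t) k) : D.l t ∉ v '' Set.Iic t := by
  rw [I.h_eq] at hwrong
  exact fun hl => hwrong ((I.isPatch t le_rfl).1 _ _ (.inl hl))

theorem G_l_h_eq_false (I : D.PathInv v t) (hl : D.l t ∉ v '' Set.Iic t) :
    D.G t (D.l t) (D.h t) = false := by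
  rw [Bool.eq_false_iff, ne_eq, I.G_iff]
  exact fun h => hl h.mem_image.1

theorem isPatch_succ_of_le (I : D.PathInv v t) (hl : D.l t ∉ v '' Set.Iic t)
    (hG : AddsLink (D.G t) (D.G (t + 1)) (D.l t) (D.h t))
    {r : ℕ} (hr : r ≤ t) :
    IsPatch (v '' Set.Iic r) (D.G (t + 1)) (D.P 0 (v 0)) (D.P (t + 1) (v r)) := by
  have hrl : v r ≠ D.l t := fun h => hl ⟨r, hr, h⟩
  obtain ⟨hon, hoff⟩ := I.isPatch r hr
  have hnotLink : ∀ x ∈ v '' Set.Iic r, x ≠ v r → x ≠ D.l t ∧ x ≠ D.h t := by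
    rintro x ⟨r', hr' : r' ≤ r, rfl⟩ hne
    refine ⟨fun h => hl ⟨r', hr'.trans hr, h⟩, fun h => hne ?_⟩
    rw [I.h_eq] at h
    obtain rfl : r' = t := I.injOn (hr'.trans hr : r' ≤ t) (le_refl t) h
    rw [le_antisymm hr hr']
  constructor
  · intro j k hjk
    by_cases hown : j = v r ∨ k = v r
    · exact D.P_eq_G_of_mem hown
    push Not at hown
    rw [D.keep t (v r) hrl j k hown.1 hown.2, hon j k hjk]
    refine (hG.apply_eq ?_ ?_).symm <;>
      rcases hjk with hj | hk
    exacts [fun h => (hnotLink j hj hown.1).1 h.1, fun h => (hnotLink k hk hown.2).2 h.2,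
      fun h => (hnotLink j hj hown.1).2 h.1, fun h => (hnotLink k hk hown.2).1 h.2]
  · intro j k hj hk
    have hself : v r ∈ v '' Set.Iic r := ⟨r, le_refl r, rfl⟩
    rw [D.keep t (v r) hrl j k (fun h => hj (h ▸ hself)) (fun h => hk (h ▸ hself)),
      hoff j k hj hk]

theorem isPatch_succ_self (I : D.PathInv v t)
    (hG : AddsLink (D.G t) (D.G (t + 1)) (D.l t) (D.h t))
    (hP : ∀ j k, j ≠ D.l t → k ≠ D.l t → D.P (t + 1) (D.l t) j k = D.P t (D.h t) j k)
    (hvs : v (t + 1) = D.l t) :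
    IsPatch (v '' Set.Iic (t + 1)) (D.G (t + 1)) (D.P 0 (v 0)) (D.P (t + 1) (v (t + 1))) := by
  obtain ⟨hon, hoff⟩ := I.isPatch t le_rfl
  rw [hvs]
  refine ⟨fun j k hjk => ?_, fun j k hj hk => ?_⟩
  · simp only [mem_image_Iic_succ, hvs] at hjk
    by_cases hown : j = D.l t ∨ k = D.l t
    · exact D.P_eq_G_of_mem hown
    push Not at hown
    rw [hP j k hown.1 hown.2, I.h_eq, hon j k (by tauto),
      hG.apply_eq (fun h => hown.1 h.1) (fun h => hown.2 h.2)]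
  · simp only [mem_image_Iic_succ, hvs, not_or] at hj hk
    rw [hP j k hj.1 hk.1, I.h_eq, hoff j k hj.2 hk.2]

theorem h_succ (I : D.PathInv v t) (hn : 2 ≤ n)
    (hmax : ∀ i, i ≠ D.h t → D.rho t i < D.rho t (D.h t))
    {k : Fin n} (hkl : k ≠ D.l t) (hkh : k ≠ D.h t)
    (hwrong : D.P t (D.h t) (D.l t) k ≠ D.G t (D.l t) k)
    (hG : AddsLink (D.G t) (D.G (t + 1)) (D.l t) (D.h t))
    (hP : ∀ j k, j ≠ D.l t → k ≠ D.l t → D.P (t + 1) (D.l t) j k = D.P t (D.h t) j k)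
    (hvs : v (t + 1) = D.l t) :
    D.h (t + 1) = D.l t := by
  have hl := I.l_not_mem hwrong
  have hW := I.isPatch_succ_self hG hP hvs
  have hWt := I.isPatch_succ_of_le hl hG le_rfl
  rw [hvs] at hW
  rw [I.h_eq] at hmax hkh hwrong hG
  have hVW : v '' Set.Iic t ⊆ v '' Set.Iic (t + 1) :=
    Set.image_mono (Set.Iic_subset_Iic.2 t.le_succ)
  have hlW : D.l t ∈ v '' Set.Iic (t + 1) := ⟨t + 1, Set.self_mem_Iic, hvs⟩
  have htW : v t ∈ v '' Set.Iic (t + 1) := ⟨t, Set.mem_Iic.2 t.le_succ, rfl⟩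
  have htl : v t ≠ D.l t := fun h => hl ⟨t, Set.self_mem_Iic, h⟩
  suffices hbest : ∀ i, i ≠ D.l t → #(agreeSet (D.G (t + 1)) (D.P (t + 1) i)) <
      #(agreeSet (D.G (t + 1)) (D.P (t + 1) (D.l t))) by
    by_contra hne
    exact (D.h_max (t + 1) (D.l t)).not_gt ((acc_lt_acc_iff hn).2 (hbest _ hne))
  intro i hil
  by_cases hit : i = v t
  · rw [hit]
    refine hWt.card_agreeSet_lt hW hVW (fun _ _ _ _ => rfl) (D.G_symm _) (D.P_symm _ _)
      (D.G_symm _) (D.P_symm _ _) hkl.symm hlW ?_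
    rwa [D.keep t (v t) htl _ _ htl.symm hkh, hG.apply_eq (fun h => hkh h.2) (fun h => hkl h.2)]
  have hGoff : ∀ j k, j ∉ v '' Set.Iic (t + 1) → k ∉ v '' Set.Iic (t + 1) →
      D.G (t + 1) j k = D.G t j k := fun j k hj _ =>
    hG.apply_eq (fun h => hj (h.1 ▸ hlW)) (fun h => hj (h.1 ▸ htW))
  calc #(agreeSet (D.G (t + 1)) (D.P (t + 1) i))
      ≤ #(agreeSet (D.G t) (D.P t i)) + 1 :=
        card_agreeSet_le_succ (fun _ _ => hG.apply_eq) (D.keep t i hil)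
          fun _ _ h => ⟨D.P_eq_G_of_mem h, D.P_eq_G_of_mem h⟩
    _ ≤ #(agreeSet (D.G t) (D.P t (v t))) := (acc_lt_acc_iff hn).1 (hmax i hit)
    _ < _ := (I.isPatch t le_rfl).card_agreeSet_lt hW hVW hGoff (D.G_symm _) (D.P_symm _ _)
        (D.G_symm _) (D.P_symm _ _) hkl.symm hlW hwrong

theorem l_eq_of_image_eq_univ (I : D.PathInv v t) (hV : v '' Set.Iic t = Set.univ)
    (hmin : ∀ i, i ≠ D.l t → D.rho t (D.l t) < D.rho t i) : D.l t = v 0 := by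
  obtain ⟨r, hr, hvr⟩ : D.l t ∈ v '' Set.Iic t := hV ▸ Set.mem_univ _
  by_contra hne
  have hle : D.rho t (v 0) ≤ D.rho t (v r) :=
    acc_le_acc_of_subset ((I.isPatch 0 (Nat.zero_le t)).agreeSet_subset (I.isPatch r hr)
      (Set.image_mono (Set.Iic_subset_Iic.2 (Nat.zero_le r))) fun _ _ _ _ => rfl)
  rw [hvr] at hle
  exact (hmin (v 0) (Ne.symm hne)).not_ge hle

end PathInv

theorem PathInv.succ {D : Dyn n 0} {t : ℕ} (I : D.PathInv v t) (hn : 2 ≤ n)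
    (huniq : (∀ i, i ≠ D.l t → D.rho t (D.l t) < D.rho t i) ∧
      (∀ i, i ≠ D.h t → D.rho t i < D.rho t (D.h t)))
    (hmis : ∃ k, k ≠ D.l t ∧ k ≠ D.h t ∧ D.P t (D.h t) (D.l t) k ≠ D.G t (D.l t) k)
    (hvs : v (t + 1) = D.l t) : D.PathInv v (t + 1) := by
  obtain ⟨k, hkl, hkh, hwrong⟩ := hmis
  have hl := I.l_not_mem hwrong
  have hlh : D.l t ≠ D.h t := fun h => hl ⟨t, Set.self_mem_Iic, (h.trans I.h_eq).symm⟩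
  obtain ⟨hG, hP⟩ := D.step_add t (I.G_l_h_eq_false hl)
    (D.thr_pos hn ((huniq.1 _ hlh.symm).trans_le (acc_le_one _ _)))
  refine ⟨?_, ?_, fun j k => ?_, fun r hr => ?_⟩
  · rw [← Order.succ_eq_add_one, Order.Iic_succ, Set.injOn_insert (by simp),
      Order.succ_eq_add_one, hvs]
    exact ⟨I.injOn, hl⟩
  · rw [hvs]
    exact I.h_succ hn huniq.2 hkl hkh hwrong hG hP hvs
  · rw [hG, I.G_iff, pathLinks_succ, hvs, I.h_eq]
    exact or_congr_right or_comm
  · rcases Nat.le_succ_iff.1 hr with hr | rfl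
    · exact I.isPatch_succ_of_le hl hG hr
    · exact I.isPatch_succ_self hG hP hvs

theorem pathInv_of_le {D : Dyn n 0} (hn : 2 ≤ n)
    (huniq : ∀ t, t ≤ n - 1 →
      (∀ i, i ≠ D.l t → D.rho t (D.l t) < D.rho t i) ∧
      (∀ i, i ≠ D.h t → D.rho t i < D.rho t (D.h t)))
    (hmis : ∀ t, t ≤ n - 2 → ∃ k, k ≠ D.l t ∧ k ≠ D.h t ∧
      D.P t (D.h t) (D.l t) k ≠ D.G t (D.l t) k)
    (hv0 : v 0 = D.h 0) (hvs : ∀ s, v (s + 1) = D.l s) :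
    ∀ t, t ≤ n - 1 → D.PathInv v t := by
  intro t
  induction t with
  | zero => exact fun _ => pathInv_zero hv0
  | succ t ih =>
    exact fun ht => (ih (by omega)).succ hn (huniq t (by omega)) (hmis t (by omega)) (hvs t)

end Dyn

theorem stmt7_general (n : ℕ) (hn : 3 ≤ n) (D : Dyn n 0)
    (huniq : ∀ t, t ≤ n - 1 →
      (∀ i, i ≠ D.l t → D.rho t (D.l t) < D.rho t i) ∧
      (∀ i, i ≠ D.h t → D.rho t i < D.rho t (D.h t)))
    (hmis : ∀ t, t ≤ n - 2 → ∃ k, k ≠ D.l t ∧ k ≠ D.h t ∧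
      D.P t (D.h t) (D.l t) k ≠ D.G t (D.l t) k)
    (v : ℕ → Fin n) (hv0 : v 0 = D.h 0) (hvs : ∀ s, v (s + 1) = D.l s) :
    (∀ s s', s ≤ n - 1 → s' ≤ n - 1 → s ≠ s' → v s ≠ v s') ∧
    (∀ t, t ≤ n - 2 → D.h (t + 1) = D.l t) ∧
    (∀ t, 1 ≤ t → t ≤ n - 1 → ∀ j k, D.G t j k = true ↔
      ∃ s, s < t ∧ ((j = v s ∧ k = v (s + 1)) ∨ (j = v (s + 1) ∧ k = v s))) ∧
    D.l (n - 1) = D.h 0 ∧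
    (∀ j k, D.G n j k = true ↔
      ∃ s, s < n ∧ ((j = v s ∧ k = v ((s + 1) % n)) ∨ (j = v ((s + 1) % n) ∧ k = v s))) := by
  have hinv := Dyn.pathInv_of_le (by omega) huniq hmis hv0 hvs
  have I := hinv (n - 1) le_rfl
  have hl : D.l (n - 1) = v 0 := I.l_eq_of_image_eq_univ
    (I.injOn.image_Iic_eq_univ (by simp; omega)) (huniq (n - 1) le_rfl).1
  have hfar : D.G (n - 1) (D.l (n - 1)) (D.h (n - 1)) = false := by
    rw [hl, I.h_eq, Bool.eq_false_iff, ne_eq, I.G_iff]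
    exact not_pathLinks_endpoints I.injOn (by omega)
  have hv1 : v 1 ≠ D.l (n - 1) := fun h =>
    one_ne_zero (I.injOn (Set.mem_Iic.2 (by omega)) (Set.mem_Iic.2 (Nat.zero_le _)) (h.trans hl))
  obtain ⟨hG, -⟩ := D.step_add (n - 1) hfar
    (D.thr_pos (by omega) (((huniq (n - 1) le_rfl).1 _ hv1).trans_le (acc_le_one _ _)))
  refine ⟨fun s s' hs hs' hne h => hne (I.injOn hs hs' h), fun t ht => ?_,
    fun t _ ht => (hinv t ht).G_iff, hl.trans hv0, fun j k => ?_⟩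
  · rw [(hinv (t + 1) (by omega)).h_eq, hvs]
  · rw [exists_cycle_iff (by omega), ← I.G_iff, ← hl, ← I.h_eq, ← hG,
      Nat.sub_add_cancel (by omega)]

/-- Proposition 1 (deterministic form), cost `c = 0`.  Label the agents by update order:
`v 0 = h_0` and `v (s+1) = l_s`.  Under uniqueness of the least/most accurate agents up to
period `n−1`, `l_t ≠ h_0` for `t ≤ n−2`, and misperception by `h_t` of some link state of
`l_t` with a third party, the agents `v 0, …, v (n−1)` are pairwise distinct,
`h_{t+1} = l_t`, for `1 ≤ t ≤ n−1` the network `G_t` is exactly the path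
`v 0 — v 1 — ⋯ — v t` (all other agents isolated), at period `n−1` the unique least
accurate agent is `h_0` (i.e. `l_{n−1} = v 0`) and the link `{h_0, l_{n−2}}` is added, so
that `G_n` is exactly the `n`-cycle `v 0 — v 1 — ⋯ — v (n−1) — v 0`. -/
theorem stmt7 (n : ℕ) (hn : 3 ≤ n) (D : Dyn n 0)
    (huniq : ∀ t, t ≤ n - 1 →
      (∀ i, i ≠ D.l t → D.rho t (D.l t) < D.rho t i) ∧
      (∀ i, i ≠ D.h t → D.rho t i < D.rho t (D.h t)))
    (hlh0 : ∀ t, t ≤ n - 2 → D.l t ≠ D.h 0)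
    (hmis : ∀ t, t ≤ n - 2 → ∃ k, k ≠ D.l t ∧ k ≠ D.h t ∧
      D.P t (D.h t) (D.l t) k ≠ D.G t (D.l t) k)
    (v : ℕ → Fin n) (hv0 : v 0 = D.h 0) (hvs : ∀ s, v (s + 1) = D.l s) :
    (∀ s s', s ≤ n - 1 → s' ≤ n - 1 → s ≠ s' → v s ≠ v s') ∧
    (∀ t, t ≤ n - 2 → D.h (t + 1) = D.l t) ∧
    (∀ t, 1 ≤ t → t ≤ n - 1 → ∀ j k, D.G t j k = true ↔
      ∃ s, s < t ∧ ((j = v s ∧ k = v (s + 1)) ∨ (j = v (s + 1) ∧ k = v s))) ∧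
    D.l (n - 1) = D.h 0 ∧
    (∀ j k, D.G n j k = true ↔
      ∃ s, s < n ∧ ((j = v s ∧ k = v ((s + 1) % n)) ∨ (j = v ((s + 1) % n) ∧ k = v s))) :=
  stmt7_general n hn D huniq hmis v hv0 hvs
end

section
/- (Absorbing-state lemma.) Consider the dynamics with cost c ≥ 0. Suppose at some period t: c ≥ c_t, and no agent attaining the minimal accuracy at t is linked in G_t to any agent attaining the maximal accuracy at t. Then G_{t+1} = G_t and P^i_{t+1} = P^i_t for every agent i, and by induction G_s = G_t and P^i_s = P^i_t for all s ≥ t: the network is in a steady state at period t. -/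
open Finset

/-- Absorbing-state lemma: if at period `t` the cost is at least the threshold cost and no
minimally accurate agent is linked to any maximally accurate agent, then the state never
changes afterwards: the network is in a steady state at period `t`. -/
theorem stmt10 (n : ℕ) (hn : 3 ≤ n) (c : ℝ) (hc0 : 0 ≤ c) (D : Dyn n c) (t : ℕ)
    (hct : D.thr t ≤ c)
    (hnolink : ∀ i j : Fin n,
      (∀ k, D.rho t i ≤ D.rho t k) →
      (∀ k, D.rho t k ≤ D.rho t j) →
      D.G t i j = false) :
    ∀ s, t ≤ s → D.G s = D.G t ∧ ∀ i, D.P s i = D.P t i := by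
  intro s hs
  induction hs with
  | refl => exact ⟨rfl, fun i => rfl⟩
  | @step m hm ih =>
    obtain ⟨hG, hP⟩ := ih
    have hrho : ∀ i, D.rho m i = D.rho t i := fun i => by
      unfold Dyn.rho; rw [hG, hP]
    have hlmin : ∀ k, D.rho t (D.l m) ≤ D.rho t k := fun k => by
      rw [← hrho (D.l m), ← hrho k]; exact D.l_min m k
    have hhmax : ∀ k, D.rho t k ≤ D.rho t (D.h m) := fun k => by
      rw [← hrho (D.h m), ← hrho k]; exact D.h_max m k
    have hfalse : D.G m (D.l m) (D.h m) = false := by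
      rw [hG]; exact hnolink _ _ hlmin hhmax
    have hheq : D.rho t (D.h m) = D.rho t (D.h t) :=
      le_antisymm (D.h_max t (D.h m)) (hhmax (D.h t))
    have hleq : D.rho t (D.l m) = D.rho t (D.l t) :=
      le_antisymm (hlmin (D.l t)) (D.l_min t (D.l m))
    have hthr : ¬ (c < 2 / (n : ℝ) + (1 - 2 / (n : ℝ)) * acc n (D.G m) (D.P m (D.h m))
        - acc n (D.G m) (D.P m (D.l m))) := by
      have e1 : acc n (D.G m) (D.P m (D.h m)) = D.rho t (D.h t) := by
        rw [← hheq, ← hrho]; rfl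
      have e2 : acc n (D.G m) (D.P m (D.l m)) = D.rho t (D.l t) := by
        rw [← hleq, ← hrho]; rfl
      rw [e1, e2]
      exact not_lt.mpr hct
    obtain ⟨hG', hP'⟩ := D.step_none m hfalse hthr
    exact ⟨hG'.trans hG, fun i => (hP' i).trans (hP i)⟩
end

section
/- (Proposition 3, part 1.) Consider the dynamics with cost c ≥ 0, and let c_0 = 2/n + (1−2/n)·max_i ρ^i_0 − min_i ρ^i_0. If c ≥ c_0, then G_t is the empty network and P^i_t = P^i_0 for every agent i and every period t; in particular the network structure in the steady state is the empty network. -/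
open Finset

/-- Proposition 3, part 1: if the cost is at least
`c₀ = 2/n + (1 − 2/n)·max_i ρ^i_0 − min_i ρ^i_0`, the network stays empty forever and no
perception ever changes; in particular the steady-state network is the empty network. -/
theorem stmt11 (n : ℕ) (hn : 3 ≤ n) (c : ℝ) (hc0 : 0 ≤ c) (D : Dyn n c)
    (hc : 2 / (n : ℝ) + (1 - 2 / (n : ℝ)) *
        ((Finset.univ : Finset (Fin n)).sup'
          ⟨⟨0, Nat.lt_of_lt_of_le (Nat.succ_pos 2) hn⟩, Finset.mem_univ _⟩
          fun i => D.rho 0 i)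
      - ((Finset.univ : Finset (Fin n)).inf'
          ⟨⟨0, Nat.lt_of_lt_of_le (Nat.succ_pos 2) hn⟩, Finset.mem_univ _⟩
          fun i => D.rho 0 i) ≤ c) :
    ∀ t, (∀ j k, D.G t j k = false) ∧ ∀ i, D.P t i = D.P 0 i := by
  intro t
  induction t with
  | zero => exact ⟨D.G_init, fun i => rfl⟩
  | succ t ih =>
    obtain ⟨hG, hP⟩ := ih
    have hGeq : D.G t = D.G 0 := by
      funext j k; rw [hG, D.G_init]
    have hrho : ∀ i, D.rho t i = D.rho 0 i := by
      intro i; unfold Dyn.rho; rw [hGeq, hP]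
    have hne : (Finset.univ : Finset (Fin n)).Nonempty :=
      ⟨⟨0, Nat.lt_of_lt_of_le (Nat.succ_pos 2) hn⟩, Finset.mem_univ _⟩
    have hsup : ((Finset.univ : Finset (Fin n)).sup'
        ⟨⟨0, Nat.lt_of_lt_of_le (Nat.succ_pos 2) hn⟩, Finset.mem_univ _⟩
        fun i => D.rho 0 i) = D.rho 0 (D.h t) := by
      apply le_antisymm
      · apply Finset.sup'_le
        intro i _
        rw [← hrho i, ← hrho (D.h t)]
        exact D.h_max t i
      · exact Finset.le_sup' _ (Finset.mem_univ _)
    have hinf : ((Finset.univ : Finset (Fin n)).inf'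
        ⟨⟨0, Nat.lt_of_lt_of_le (Nat.succ_pos 2) hn⟩, Finset.mem_univ _⟩
        fun i => D.rho 0 i) = D.rho 0 (D.l t) := by
      apply le_antisymm
      · exact Finset.inf'_le _ (Finset.mem_univ _)
      · apply Finset.le_inf'
        intro i _
        rw [← hrho i, ← hrho (D.l t)]
        exact D.l_min t i
    have hfalse : D.G t (D.l t) (D.h t) = false := hG _ _
    have hnotlt : ¬ c < 2 / (n : ℝ) + (1 - 2 / (n : ℝ)) * acc n (D.G t) (D.P t (D.h t))
        - acc n (D.G t) (D.P t (D.l t)) := by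
      have h1 : acc n (D.G t) (D.P t (D.h t)) = D.rho t (D.h t) := rfl
      have h2 : acc n (D.G t) (D.P t (D.l t)) = D.rho t (D.l t) := rfl
      rw [h1, h2, hrho, hrho, ← hsup, ← hinf]
      exact not_lt.mpr hc
    obtain ⟨hGs, hPs⟩ := D.step_none t hfalse hnotlt
    refine ⟨fun j k => by rw [hGs]; exact hG j k, fun i => by rw [hPs, hP]⟩
end
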